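/- arXiv:2009.04988 — 5 statements merged into one kernel-verified Lean document; each statement's English description precedes it below -/
import Mathlib

section
/- Let A be a self-adjoint linear map on ℝⁿ, and let x, y be points with Ax·x = 1, Ay·y = 1, x ≠ y. If u is a unit vector collinear with y − x (pointing from x to y), then Ax·u = −Ay·u. In particular, if v is the reflection of u at y in the hyperplane orthogonal to the normal Ay (i.e., v = u − 2(u·n)n with n the unit vector along Ay), then Ax·u = Ay·v; that is, the Joachimsthal quantity Ax·u is invariant under the billiard map in the ellipsoid Ax·x = 1. -/
open scoped RealInnerProductSpace

/-! For a symmetric `A`, the polarization identity `⟪A x + A y, y - x⟫ = ⟪A y, y⟫ - ⟪A x, x⟫` shows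
that along a chord of a level set of the quadratic form `⟪A z, z⟫` the normals at the two ends
have opposite components. Reflecting in the hyperplane orthogonal to the normal `A y` flips the
sign of the component along `A y` once more, so `⟪A x, u⟫` is carried to `⟪A y, v⟫`. -/

variable {E : Type*} [NormedAddCommGroup E] [InnerProductSpace ℝ E]

noncomputable def reflectOrthogonal (w u : E) : E :=
  u - (2 * ⟪u, ‖w‖⁻¹ • w⟫) • (‖w‖⁻¹ • w)

theorem inner_reflectOrthogonal_self (w u : E) :
    ⟪w, reflectOrthogonal w u⟫ = -⟪w, u⟫ := by
  rcases eq_or_ne w 0 with rfl | hw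
  · simp
  have hw' : ‖w‖ ≠ 0 := norm_ne_zero_iff.mpr hw
  rw [reflectOrthogonal, inner_sub_right, real_inner_smul_right, real_inner_smul_right,
    real_inner_smul_right, real_inner_self_eq_norm_sq, real_inner_comm u w]
  field_simp
  ring

namespace LinearMap.IsSymmetric

variable {A : E →ₗ[ℝ] E}

theorem inner_add_apply_sub (hA : A.IsSymmetric) (x y : E) :
    ⟪A x + A y, y - x⟫ = ⟪A y, y⟫ - ⟪A x, x⟫ := by
  rw [inner_add_left, inner_sub_right, inner_sub_right, hA x y, real_inner_comm (A y) x]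
  ring

theorem inner_apply_smul_sub_eq_neg (hA : A.IsSymmetric) {x y : E}
    (hxy : ⟪A x, x⟫ = ⟪A y, y⟫) (c : ℝ) :
    ⟪A x, c • (y - x)⟫ = -⟪A y, c • (y - x)⟫ := by
  have hsum := hA.inner_add_apply_sub x y
  rw [hxy, sub_self, inner_add_left] at hsum
  rw [real_inner_smul_right, real_inner_smul_right]
  linear_combination c * hsum

end LinearMap.IsSymmetric

theorem joachimsthal_billiard_invariant_general (n : ℕ)
    (A : EuclideanSpace ℝ (Fin n) →ₗ[ℝ] EuclideanSpace ℝ (Fin n))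
    (hA : ∀ u v, ⟪A u, v⟫ = ⟪u, A v⟫)
    (x y : EuclideanSpace ℝ (Fin n))
    (hx : ⟪A x, x⟫ = 1) (hy : ⟪A y, y⟫ = 1)
    (u : EuclideanSpace ℝ (Fin n))
    (hu : u = ‖y - x‖⁻¹ • (y - x)) :
    ⟪A x, u⟫ = - ⟪A y, u⟫ ∧
    (A y ≠ 0 →
      ∀ nv v : EuclideanSpace ℝ (Fin n),
        nv = ‖A y‖⁻¹ • A y →
        v = u - (2 * ⟪u, nv⟫) • nv →
        ⟪A x, u⟫ = ⟪A y, v⟫) := by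
  have hchord : ⟪A x, u⟫ = -⟪A y, u⟫ :=
    hu ▸ LinearMap.IsSymmetric.inner_apply_smul_sub_eq_neg hA (hx.trans hy.symm) _
  refine ⟨hchord, fun _ nv v hnv hv => ?_⟩
  have hreflect : v = reflectOrthogonal (A y) u := by rw [hv, hnv, reflectOrthogonal]
  rw [hreflect, inner_reflectOrthogonal_self, hchord]

theorem joachimsthal_billiard_invariant (n : ℕ)
    (A : EuclideanSpace ℝ (Fin n) →ₗ[ℝ] EuclideanSpace ℝ (Fin n))
    (hA : ∀ u v, ⟪A u, v⟫ = ⟪u, A v⟫)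
    (x y : EuclideanSpace ℝ (Fin n))
    (hx : ⟪A x, x⟫ = 1) (hy : ⟪A y, y⟫ = 1) (hxy : x ≠ y)
    (u : EuclideanSpace ℝ (Fin n))
    (hu : u = ‖y - x‖⁻¹ • (y - x)) :
    ⟪A x, u⟫ = - ⟪A y, u⟫ ∧
    (A y ≠ 0 →
      ∀ nv v : EuclideanSpace ℝ (Fin n),
        nv = ‖A y‖⁻¹ • A y →
        v = u - (2 * ⟪u, nv⟫) • nv →
        ⟪A x, u⟫ = ⟪A y, v⟫) :=
  joachimsthal_billiard_invariant_general n A hA x y hx hy u hu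
end

section
/- Conic characterization of plane curves by a symmetric linear billiard integral: let γ be a germ of a smooth strictly convex plane curve admitting a nowhere-vanishing normal vector field N such that for all points x, y on γ, N(x)·(y − x) = −N(y)·(y − x). Then γ is contained in a conic. -/
/-- The 2×2 determinant of two plane vectors. -/
def det2 (u v : ℝ × ℝ) : ℝ := u.1 * v.2 - u.2 * v.1

/-- Euclidean dot product on the plane. -/
def dot2 (u v : ℝ × ℝ) : ℝ := u.1 * v.1 + u.2 * v.2

private lemma deriv_congr_on {f g : ℝ → ℝ} {I : Set ℝ} (hI : IsOpen I) {x : ℝ} (hx : x ∈ I)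
    (h : ∀ y ∈ I, f y = g y) : deriv f x = deriv g x :=
  Filter.EventuallyEq.deriv_eq (Filter.eventuallyEq_of_mem (hI.mem_nhds hx) h)

theorem linear_billiard_integral_implies_conic
    (I : Set ℝ) (hI : IsOpen I) (hIne : I.Nonempty)
    (γ N : ℝ → ℝ × ℝ)
    (hγ : ContDiff ℝ (⊤ : ℕ∞) γ) (hN : ContDiff ℝ (⊤ : ℕ∞) N)
    (hreg : ∀ t ∈ I, iteratedDeriv 1 γ t ≠ 0)
    (hconv : ∀ t ∈ I, det2 (iteratedDeriv 1 γ t) (iteratedDeriv 2 γ t) ≠ 0)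
    (hNne : ∀ t ∈ I, N t ≠ 0)
    (hNorth : ∀ t ∈ I, dot2 (N t) (iteratedDeriv 1 γ t) = 0)
    (hint : ∀ s ∈ I, ∀ t ∈ I,
      dot2 (N s) (γ t - γ s) = - dot2 (N t) (γ t - γ s)) :
    ∃ a b c d e g : ℝ, ¬(a = 0 ∧ b = 0 ∧ c = 0 ∧ d = 0 ∧ e = 0 ∧ g = 0) ∧
      ∀ t ∈ I,
        a * (γ t).1 ^ 2 + b * (γ t).1 * (γ t).2 + c * (γ t).2 ^ 2
          + d * (γ t).1 + e * (γ t).2 + g = 0 := by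
  classical
  -- component functions
  set x1 : ℝ → ℝ := fun t => (γ t).1 with hx1def
  set x2 : ℝ → ℝ := fun t => (γ t).2 with hx2def
  set n1 : ℝ → ℝ := fun t => (N t).1 with hn1def
  set n2 : ℝ → ℝ := fun t => (N t).2 with hn2def
  have hx1s : ContDiff ℝ (⊤:ℕ∞) x1 := (contDiff_fst.comp hγ).of_le (by simp)
  have hx2s : ContDiff ℝ (⊤:ℕ∞) x2 := (contDiff_snd.comp hγ).of_le (by simp)
  have hn1s : ContDiff ℝ (⊤:ℕ∞) n1 := (contDiff_fst.comp hN).of_le (by simp)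
  have hn2s : ContDiff ℝ (⊤:ℕ∞) n2 := (contDiff_snd.comp hN).of_le (by simp)
  have hdx1 : ∀ t, HasDerivAt x1 (deriv x1 t) t :=
    fun t => (hx1s.differentiable (by norm_num) t).hasDerivAt
  have hdx2 : ∀ t, HasDerivAt x2 (deriv x2 t) t :=
    fun t => (hx2s.differentiable (by norm_num) t).hasDerivAt
  have hdn1 : ∀ t, HasDerivAt n1 (deriv n1 t) t :=
    fun t => (hn1s.differentiable (by norm_num) t).hasDerivAt
  have hdn2 : ∀ t, HasDerivAt n2 (deriv n2 t) t :=
    fun t => (hn2s.differentiable (by norm_num) t).hasDerivAt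
  have hddx1 : ∀ t, HasDerivAt (deriv x1) (deriv (deriv x1) t) t :=
    fun t => (((contDiff_infty_iff_deriv.mp hx1s).2).differentiable (by norm_num) t).hasDerivAt
  have hddx2 : ∀ t, HasDerivAt (deriv x2) (deriv (deriv x2) t) t :=
    fun t => (((contDiff_infty_iff_deriv.mp hx2s).2).differentiable (by norm_num) t).hasDerivAt
  -- first and second derivatives of γ in components
  have hγ1 : ∀ t, iteratedDeriv 1 γ t = (deriv x1 t, deriv x2 t) := by
    intro t
    rw [iteratedDeriv_one]
    exact ((hdx1 t).prodMk (hdx2 t)).deriv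
  have hγ2 : ∀ t, iteratedDeriv 2 γ t = (deriv (deriv x1) t, deriv (deriv x2) t) := by
    intro t
    rw [iteratedDeriv_succ, iteratedDeriv_one]
    have hdg : deriv γ = fun u => (deriv x1 u, deriv x2 u) := by
      funext u; exact ((hdx1 u).prodMk (hdx2 u)).deriv
    rw [hdg]
    exact ((hddx1 t).prodMk (hddx2 t)).deriv
  -- hypotheses in components
  have hconv' : ∀ t ∈ I,
      deriv x1 t * deriv (deriv x2) t - deriv x2 t * deriv (deriv x1) t ≠ 0 := by
    intro t ht
    have := hconv t ht
    rw [hγ1 t, hγ2 t] at this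
    simpa [det2] using this
  have hNorth' : ∀ t ∈ I, n1 t * deriv x1 t + n2 t * deriv x2 t = 0 := by
    intro t ht
    have := hNorth t ht
    rw [hγ1 t] at this
    simpa [dot2] using this
  have hint' : ∀ s ∈ I, ∀ t ∈ I,
      (n1 s + n1 t) * (x1 t - x1 s) + (n2 s + n2 t) * (x2 t - x2 s) = 0 := by
    intro s hs t ht
    have := hint s hs t ht
    simp only [dot2, Prod.fst_sub, Prod.snd_sub] at this
    simp only [hx1def, hx2def, hn1def, hn2def]
    ring_nf
    ring_nf at this
    linarith
  -- Step 1: differentiate the integral identity in s: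
  -- ∀ s t ∈ I, n1'(s)(x1 t - x1 s) + n2'(s)(x2 t - x2 s) = n1 t * x1' s + n2 t * x2' s
  have star : ∀ s ∈ I, ∀ t ∈ I,
      deriv n1 s * (x1 t - x1 s) + deriv n2 s * (x2 t - x2 s)
        = n1 t * deriv x1 s + n2 t * deriv x2 s := by
    intro s hs t ht
    have hF : HasDerivAt
        (fun u => (n1 u + n1 t) * (x1 t - x1 u) + (n2 u + n2 t) * (x2 t - x2 u))
        ((deriv n1 s) * (x1 t - x1 s) + (n1 s + n1 t) * (-deriv x1 s)
          + ((deriv n2 s) * (x2 t - x2 s) + (n2 s + n2 t) * (-deriv x2 s))) s := by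
      exact (((hdn1 s).add_const (n1 t)).mul ((hdx1 s).const_sub (x1 t))).add
        (((hdn2 s).add_const (n2 t)).mul ((hdx2 s).const_sub (x2 t)))
    have h0 : deriv
        (fun u => (n1 u + n1 t) * (x1 t - x1 u) + (n2 u + n2 t) * (x2 t - x2 u)) s = 0 := by
      rw [deriv_congr_on hI hs (g := fun _ => (0:ℝ)) (fun y hy => hint' y hy t ht)]
      simp
    have := hF.deriv
    rw [h0] at this
    have hor := hNorth' s hs
    nlinarith [this, hor]
  -- Step 2: choose s₀ ∈ I and s₁ ∈ I with independent tangents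
  obtain ⟨s₀, hs₀⟩ := hIne
  set p1 : ℝ := deriv x1 s₀ with hp1
  set p2 : ℝ := deriv x2 s₀ with hp2
  have hs₁ : ∃ s₁ ∈ I, p1 * deriv x2 s₁ - p2 * deriv x1 s₁ ≠ 0 := by
    by_contra hcon
    push_neg at hcon
    have hf : HasDerivAt (fun t => p1 * deriv x2 t - p2 * deriv x1 t)
        (p1 * deriv (deriv x2) s₀ - p2 * deriv (deriv x1) s₀) s₀ :=
      ((hddx2 s₀).const_mul p1).sub ((hddx1 s₀).const_mul p2)
    have h0 : deriv (fun t => p1 * deriv x2 t - p2 * deriv x1 t) s₀ = 0 := by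
      rw [deriv_congr_on hI hs₀ (g := fun _ => (0:ℝ)) hcon]
      simp
    rw [hf.deriv] at h0
    exact hconv' s₀ hs₀ h0
  obtain ⟨s₁, hs₁I, hΔ⟩ := hs₁
  set q1 : ℝ := deriv x1 s₁ with hq1
  set q2 : ℝ := deriv x2 s₁ with hq2
  set Δ : ℝ := p1 * q2 - p2 * q1 with hΔdef
  have hΔne : Δ ≠ 0 := hΔ
  -- Step 3: N is an affine function of γ on I
  set a1 : ℝ := deriv n1 s₀ with ha1
  set a2 : ℝ := deriv n2 s₀ with ha2
  set b1 : ℝ := deriv n1 s₁ with hb1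
  set b2 : ℝ := deriv n2 s₁ with hb2
  have E1 : ∀ t ∈ I, a1 * (x1 t - x1 s₀) + a2 * (x2 t - x2 s₀)
      = n1 t * p1 + n2 t * p2 := fun t ht => star s₀ hs₀ t ht
  have E2 : ∀ t ∈ I, b1 * (x1 t - x1 s₁) + b2 * (x2 t - x2 s₁)
      = n1 t * q1 + n2 t * q2 := fun t ht => star s₁ hs₁I t ht
  set ca : ℝ := -(a1 * x1 s₀ + a2 * x2 s₀) with hca
  set cb : ℝ := -(b1 * x1 s₁ + b2 * x2 s₁) with hcb
  set m11 : ℝ := (a1 * q2 - b1 * p2) / Δ with hm11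
  set m12 : ℝ := (a2 * q2 - b2 * p2) / Δ with hm12
  set m21 : ℝ := (b1 * p1 - a1 * q1) / Δ with hm21
  set m22 : ℝ := (b2 * p1 - a2 * q1) / Δ with hm22
  set c1 : ℝ := (ca * q2 - cb * p2) / Δ with hc1
  set c2 : ℝ := (cb * p1 - ca * q1) / Δ with hc2
  have hn1aff : ∀ t ∈ I, n1 t = m11 * x1 t + m12 * x2 t + c1 := by
    intro t ht
    have e1 := E1 t ht
    have e2 := E2 t ht
    have key : n1 t * Δ = (a1 * q2 - b1 * p2) * x1 t + (a2 * q2 - b2 * p2) * x2 t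
        + (ca * q2 - cb * p2) := by
      rw [hΔdef, hca, hcb]; linear_combination p2 * e2 - q2 * e1
    rw [hm11, hm12, hc1]
    have expand : (a1 * q2 - b1 * p2) / Δ * x1 t + (a2 * q2 - b2 * p2) / Δ * x2 t
        + (ca * q2 - cb * p2) / Δ
        = ((a1 * q2 - b1 * p2) * x1 t + (a2 * q2 - b2 * p2) * x2 t + (ca * q2 - cb * p2)) / Δ := by
      ring
    rw [expand, eq_div_iff hΔne]
    linear_combination key
  have hn2aff : ∀ t ∈ I, n2 t = m21 * x1 t + m22 * x2 t + c2 := by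
    intro t ht
    have e1 := E1 t ht
    have e2 := E2 t ht
    have key : n2 t * Δ = (b1 * p1 - a1 * q1) * x1 t + (b2 * p1 - a2 * q1) * x2 t
        + (cb * p1 - ca * q1) := by
      rw [hΔdef, hca, hcb]; linear_combination q1 * e1 - p1 * e2
    rw [hm21, hm22, hc2]
    have expand : (b1 * p1 - a1 * q1) / Δ * x1 t + (b2 * p1 - a2 * q1) / Δ * x2 t
        + (cb * p1 - ca * q1) / Δ
        = ((b1 * p1 - a1 * q1) * x1 t + (b2 * p1 - a2 * q1) * x2 t + (cb * p1 - ca * q1)) / Δ := by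
      ring
    rw [expand, eq_div_iff hΔne]
    linear_combination key
  -- Step 4: symmetry of M
  have dd : a1 * q1 + a2 * q2 = b1 * p1 + b2 * p2 := by
    have hG : HasDerivAt
        (fun t => a1 * (x1 t - x1 s₀) + a2 * (x2 t - x2 s₀) - (n1 t * p1 + n2 t * p2))
        (a1 * deriv x1 s₁ + a2 * deriv x2 s₁ - (deriv n1 s₁ * p1 + deriv n2 s₁ * p2)) s₁ := by
      have h1 : HasDerivAt (fun t => x1 t - x1 s₀) (deriv x1 s₁) s₁ := (hdx1 s₁).sub_const _
      have h2 : HasDerivAt (fun t => x2 t - x2 s₀) (deriv x2 s₁) s₁ := (hdx2 s₁).sub_const _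
      exact ((h1.const_mul a1).add (h2.const_mul a2)).sub
        (((hdn1 s₁).mul_const p1).add ((hdn2 s₁).mul_const p2))
    have h0 : deriv
        (fun t => a1 * (x1 t - x1 s₀) + a2 * (x2 t - x2 s₀) - (n1 t * p1 + n2 t * p2)) s₁
        = 0 := by
      rw [deriv_congr_on hI hs₁I (g := fun _ => (0:ℝ))
        (fun y hy => sub_eq_zero.mpr (E1 y hy))]
      simp
    rw [hG.deriv] at h0
    rw [hq1, hq2, hb1, hb2]
    linarith
  have hsym : m12 = m21 := by
    rw [hm12, hm21]
    field_simp
    linarith [dd]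
  -- Step 5: the conic
  refine ⟨m11, m12 + m21, m22, 2 * c1, 2 * c2,
    -(m11 * (x1 s₀)^2 + (m12 + m21) * (x1 s₀) * (x2 s₀) + m22 * (x2 s₀)^2
      + 2 * c1 * (x1 s₀) + 2 * c2 * (x2 s₀)), ?_, ?_⟩
  · rintro ⟨h1, h2, h3, h4, h5, -⟩
    have hm12z : m12 = 0 := by rw [hsym] at h2 ⊢; linarith
    have hm21z : m21 = 0 := by rw [← hsym] at h2 ⊢; linarith
    have hc1z : c1 = 0 := by linarith
    have hc2z : c2 = 0 := by linarith
    have hn1z : n1 s₀ = 0 := by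
      rw [hn1aff s₀ hs₀, h1, hm12z, hc1z]; ring
    have hn2z : n2 s₀ = 0 := by
      rw [hn2aff s₀ hs₀, h3, hm21z, hc2z]; ring
    exact hNne s₀ hs₀ (Prod.ext hn1z hn2z)
  · intro t ht
    have hi := hint' s₀ hs₀ t ht
    have e1 := hn1aff t ht
    have e2 := hn2aff t ht
    have e3 := hn1aff s₀ hs₀
    have e4 := hn2aff s₀ hs₀
    rw [e1, e3, e2, e4] at hi
    linear_combination hi - (x2 s₀ * x1 t - x1 s₀ * x2 t) * hsym
end

section
/- Let γ : ℝ → ℝ² be a smooth strictly convex curve parameterized so that for all x and all sufficiently small ε, [γ̇(x−ε) + γ̇(x+ε), γ(x+ε) − γ(x−ε)] = 0. Define A(x, y) to be the (signed) area bounded by the arc of γ from γ(x) to γ(y) and the chord joining them. Then for each fixed constant c, the function x ↦ A(x, x + c) is constant. -/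
theorem area_Poritsky_property
    (γ : ℝ → ℝ × ℝ) (hγ : ContDiff ℝ (⊤ : ℕ∞) γ)
    (hchord : ∀ x ε : ℝ,
      det2 (deriv γ (x - ε) + deriv γ (x + ε)) (γ (x + ε) - γ (x - ε)) = 0)
    (A : ℝ → ℝ → ℝ)
    (hAx : ∀ x y : ℝ,
      HasDerivAt (fun x' => A x' y) (det2 (γ y - γ x) (deriv γ x)) x)
    (hAy : ∀ x y : ℝ,
      HasDerivAt (fun y' => A x y') (det2 (γ y - γ x) (deriv γ y)) y) :
    ∀ c x₁ x₂ : ℝ, A x₁ (x₁ + c) = A x₂ (x₂ + c) := by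
  intro c x₁ x₂
  have hdγ : Differentiable ℝ γ := hγ.differentiable (by simp)
  have hcγ : Continuous γ := hγ.continuous
  have hcd : Continuous (deriv γ) := hγ.continuous_deriv (by simp)
  have hF : Continuous (fun t => det2 (γ t) (deriv γ t)) := by
    unfold det2
    exact ((hcγ.fst.mul hcd.snd).sub (hcγ.snd.mul hcd.fst))
  have hInt : ∀ b x : ℝ,
      HasDerivAt (fun x => ∫ t in b..x, det2 (γ t) (deriv γ t))
        (det2 (γ x) (deriv γ x)) x := by
    intro b x
    exact intervalIntegral.integral_hasDerivAt_right (hF.intervalIntegrable b x)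
      (hF.stronglyMeasurableAtFilter _ _) hF.continuousAt
  have h1 : ∀ x : ℝ, HasDerivAt (fun x => (γ x).1) ((deriv γ x).1) x :=
    fun x => ((hdγ x).hasDerivAt).fst
  have h2 : ∀ x : ℝ, HasDerivAt (fun x => (γ x).2) ((deriv γ x).2) x :=
    fun x => ((hdγ x).hasDerivAt).snd
  -- representation of A in its first variable
  have rep : ∀ b y x : ℝ, A x y = A b y
      + ((γ y).1 * ((γ x).2 - (γ b).2) - (γ y).2 * ((γ x).1 - (γ b).1))
      - ∫ t in b..x, det2 (γ t) (deriv γ t) := by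
    intro b y x
    set g : ℝ → ℝ := fun x => A x y -
      ((γ y).1 * (γ x).2 - (γ y).2 * (γ x).1 - ∫ t in b..x, det2 (γ t) (deriv γ t))
      with hgdef
    have hg : ∀ u : ℝ, HasDerivAt g 0 u := by
      intro u
      have h := (hAx u y).sub
        ((((h2 u).const_mul (γ y).1).sub ((h1 u).const_mul (γ y).2)).sub (hInt b u))
      refine h.congr_deriv ?_
      simp only [det2, Prod.fst_sub, Prod.snd_sub]
      ring
    have hc : g x = g b :=
      is_const_of_deriv_eq_zero (fun u => (hg u).differentiableAt)
        (fun u => (hg u).deriv) x b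
    simp only [hgdef, intervalIntegral.integral_same] at hc
    linarith
  -- the function x ↦ A x (x + c)
  set φ : ℝ → ℝ := fun x => A x (x + c) with hφdef
  have hφeq : φ = fun x => A x₁ (x + c)
      + ((γ (x + c)).1 * ((γ x).2 - (γ x₁).2) - (γ (x + c)).2 * ((γ x).1 - (γ x₁).1))
      - ∫ t in x₁..x, det2 (γ t) (deriv γ t) := by
    funext x
    exact rep x₁ (x + c) x
  have hshift : ∀ x : ℝ, HasDerivAt (fun x : ℝ => x + c) 1 x :=
    fun x => (hasDerivAt_id x).add_const c
  have hφ' : ∀ x : ℝ, HasDerivAt φ 0 x := by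
    intro x
    rw [hφeq]
    have hA1 : HasDerivAt (fun x : ℝ => A x₁ (x + c))
        (det2 (γ (x + c) - γ x₁) (deriv γ (x + c)) * 1) x :=
      (hAy x₁ (x + c)).comp x (hshift x)
    have hγc : HasDerivAt (fun x : ℝ => γ (x + c)) ((1 : ℝ) • deriv γ (x + c)) x :=
      ((hdγ (x + c)).hasDerivAt).scomp x (hshift x)
    have hγc1 : HasDerivAt (fun x : ℝ => (γ (x + c)).1) (((1 : ℝ) • deriv γ (x + c)).1) x :=
      hγc.fst
    have hγc2 : HasDerivAt (fun x : ℝ => (γ (x + c)).2) (((1 : ℝ) • deriv γ (x + c)).2) x :=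
      hγc.snd
    have h := (hA1.add
      ((hγc1.mul ((h2 x).sub_const (γ x₁).2)).sub
        (hγc2.mul ((h1 x).sub_const (γ x₁).1)))).sub (hInt x₁ x)
    refine h.congr_deriv ?_
    have hch := hchord (x + c / 2) (c / 2)
    have e1 : x + c / 2 - c / 2 = x := by ring
    have e2 : x + c / 2 + c / 2 = x + c := by ring
    rw [e1, e2] at hch
    simp only [det2, Prod.fst_sub, Prod.snd_sub, Prod.fst_add, Prod.snd_add,
      Prod.smul_fst, Prod.smul_snd, smul_eq_mul] at hch ⊢
    nlinarith [hch]
  have : φ x₁ = φ x₂ :=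
    is_const_of_deriv_eq_zero (fun u => (hφ' u).differentiableAt)
      (fun u => (hφ' u).deriv) x₁ x₂
  simpa [hφdef] using this
end

section
/- Let γ : ℝ → ℝ³ be smooth with [γ, γ', γ''] = 1 and γ''' = aγ + bγ'. Then the expression (γ⁽ᵛ⁾ × γ)·γ'/30 + (γ' × γ)·γ⁽ᵛ⁾/6 − (γ'' × γ')·γ''' + (γ''' × γ'')·γ'/3 equals, up to a nonzero constant factor, (2a − b')·[γ, γ', γ''] = 2a − b'. -/
open Matrix

/-- Determinant of three vectors in ℝ³. -/
def det3 (u v w : Fin 3 → ℝ) : ℝ := Matrix.det (Matrix.of ![u, v, w])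

theorem spherical_quintic_term (γ : ℝ → Fin 3 → ℝ) (a b : ℝ → ℝ)
    (hγ : ContDiff ℝ (⊤ : ℕ∞) γ) (ha : ContDiff ℝ (⊤ : ℕ∞) a) (hb : ContDiff ℝ (⊤ : ℕ∞) b)
    (hdet : ∀ t, det3 (γ t) (iteratedDeriv 1 γ t) (iteratedDeriv 2 γ t) = 1)
    (h3 : ∀ t, iteratedDeriv 3 γ t = a t • γ t + b t • iteratedDeriv 1 γ t) :
    ∃ c : ℝ, c ≠ 0 ∧ ∀ t,
      (iteratedDeriv 5 γ t ⨯₃ γ t) ⬝ᵥ iteratedDeriv 1 γ t / 30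
        + (iteratedDeriv 1 γ t ⨯₃ γ t) ⬝ᵥ iteratedDeriv 5 γ t / 6
        - (iteratedDeriv 2 γ t ⨯₃ iteratedDeriv 1 γ t) ⬝ᵥ iteratedDeriv 3 γ t
        + (iteratedDeriv 3 γ t ⨯₃ iteratedDeriv 2 γ t) ⬝ᵥ iteratedDeriv 1 γ t / 3
      = c * (2 * a t - deriv b t) := by
  have hdiff : ∀ n : ℕ, Differentiable ℝ (iteratedDeriv n γ) := fun n =>
    hγ.differentiable_iteratedDeriv n (by exact_mod_cast lt_top_iff_ne_top.2 (by simp))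
  have hD : ∀ (n : ℕ) (t : ℝ), HasDerivAt (iteratedDeriv n γ) (iteratedDeriv (n + 1) γ t) t := by
    intro n t
    rw [iteratedDeriv_succ]
    exact ((hdiff n) t).hasDerivAt
  have hda : Differentiable ℝ (deriv a) := by
    rw [← iteratedDeriv_one]
    exact ha.differentiable_iteratedDeriv 1 (by exact_mod_cast lt_top_iff_ne_top.2 (by simp))
  have hdb : Differentiable ℝ (deriv b) := by
    rw [← iteratedDeriv_one]
    exact hb.differentiable_iteratedDeriv 1 (by exact_mod_cast lt_top_iff_ne_top.2 (by simp))
  have hγ' : ∀ t : ℝ, HasDerivAt γ (iteratedDeriv 1 γ t) t := by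
    intro t
    simpa [iteratedDeriv_zero] using hD 0 t
  have h4 : ∀ t, iteratedDeriv 4 γ t =
      deriv a t • γ t + (a t + deriv b t) • iteratedDeriv 1 γ t
        + b t • iteratedDeriv 2 γ t := by
    intro t
    have h3' : iteratedDeriv 3 γ = fun s => a s • γ s + b s • iteratedDeriv 1 γ s := funext h3
    have H : HasDerivAt (fun s => a s • γ s + b s • iteratedDeriv 1 γ s)
        ((a t • iteratedDeriv 1 γ t + deriv a t • γ t)
          + (b t • iteratedDeriv 2 γ t + deriv b t • iteratedDeriv 1 γ t)) t :=
      (((ha.differentiable (by simp) t).hasDerivAt.smul (hγ' t)).add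
        ((hb.differentiable (by simp) t).hasDerivAt.smul (hD 1 t)))
    have : iteratedDeriv 4 γ t = deriv (iteratedDeriv 3 γ) t := by
      rw [show (4 : ℕ) = 3 + 1 from rfl, iteratedDeriv_succ]
    rw [this, h3', H.deriv]
    module
  have h5 : ∀ t, iteratedDeriv 5 γ t =
      (deriv (deriv a) t + b t * a t) • γ t
        + (2 * deriv a t + deriv (deriv b) t + b t * b t) • iteratedDeriv 1 γ t
        + (a t + 2 * deriv b t) • iteratedDeriv 2 γ t := by
    intro t
    have h4' : iteratedDeriv 4 γ = fun s =>
        deriv a s • γ s + (a s + deriv b s) • iteratedDeriv 1 γ s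
          + b s • iteratedDeriv 2 γ s := funext h4
    have H : HasDerivAt (fun s => deriv a s • γ s + (a s + deriv b s) • iteratedDeriv 1 γ s
          + b s • iteratedDeriv 2 γ s)
        (((deriv a t • iteratedDeriv 1 γ t + deriv (deriv a) t • γ t)
          + ((a t + deriv b t) • iteratedDeriv 2 γ t
            + (deriv a t + deriv (deriv b) t) • iteratedDeriv 1 γ t))
          + (b t • iteratedDeriv 3 γ t + deriv b t • iteratedDeriv 2 γ t)) t :=
      (((hda t).hasDerivAt.smul (hγ' t)).add
        (((ha.differentiable (by simp) t).hasDerivAt.add (hdb t).hasDerivAt).smul (hD 1 t))).add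
        ((hb.differentiable (by simp) t).hasDerivAt.smul (hD 2 t))
    have h5eq : iteratedDeriv 5 γ t = deriv (iteratedDeriv 4 γ) t := by
      rw [show (5 : ℕ) = 4 + 1 from rfl, iteratedDeriv_succ]
    rw [h5eq, h4', H.deriv, h3 t]
    module
  refine ⟨4 / 15, by norm_num, fun t => ?_⟩
  rw [h5 t, h3 t]
  have hd := hdet t
  simp only [det3, Matrix.det_fin_three, Matrix.of_apply, Matrix.cons_val', Matrix.cons_val_zero,
    Matrix.cons_val_one, Matrix.head_cons, Matrix.head_fin_const, Matrix.empty_val',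
    Matrix.cons_val_fin_one, Matrix.cons_val_two, Matrix.tail_cons] at hd
  simp only [cross_apply, dotProduct, Fin.sum_univ_three, Pi.add_apply, Pi.smul_apply,
    smul_eq_mul, Matrix.cons_val_zero, Matrix.cons_val_one, Matrix.head_cons, Matrix.cons_val_two,
    Matrix.tail_cons]
  linear_combination (4 / 15 * (2 * a t - deriv b t)) * hd
end

section
/- Let S be a smooth hypersurface in ℝⁿ (n ≥ 3), π a 2-plane intersecting S transversally along a curve γ, and N a nowhere-vanishing normal vector field on S satisfying (N(x) + N(y))·(y − x) = 0 for all x, y ∈ S. Let ν(x) be the orthogonal projection of N(x) onto the direction space of π, for x ∈ γ. Then ν is nowhere vanishing on γ, ν(x) is orthogonal to the tangent line of γ at x, and (ν(x) + ν(y))·(y − x) = 0 for all x, y ∈ γ. -/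
open scoped RealInnerProductSpace


lemma proj_inner_eq {n : ℕ} (P : Submodule ℝ (EuclideanSpace ℝ (Fin n)))
    (u v : EuclideanSpace ℝ (Fin n)) (hv : v ∈ P) :
    ⟪(P.orthogonalProjection u : EuclideanSpace ℝ (Fin n)), v⟫ = ⟪u, v⟫ := by
  have h := P.starProjection_inner_eq_zero u v hv
  rw [inner_sub_left, Submodule.starProjection_apply] at h
  linarith

lemma deriv_mem_of_mem {n : ℕ} (P : Submodule ℝ (EuclideanSpace ℝ (Fin n)))
    (p : EuclideanSpace ℝ (Fin n)) (g : ℝ → EuclideanSpace ℝ (Fin n))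
    (hg : ContDiff ℝ (⊤ : ℕ∞) g) (hmem : ∀ t, g t - p ∈ P) (t : ℝ) :
    deriv g t ∈ P := by
  have hd : HasDerivAt (fun s => g s - p) (deriv g t) t := by
    simpa using ((hg.differentiable (by simp) t).hasDerivAt.sub_const p)
  rw [hasDerivAt_iff_tendsto_slope] at hd
  have hcl : IsClosed (P : Set (EuclideanSpace ℝ (Fin n))) :=
    Submodule.closed_of_finiteDimensional P
  refine hcl.mem_of_tendsto hd ?_
  filter_upwards with s
  exact P.smul_mem _ (P.sub_mem (hmem s) (hmem t))

theorem projected_normal_field_on_plane_section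
    (n : ℕ) (hn : 3 ≤ n)
    (S : Set (EuclideanSpace ℝ (Fin n)))
    (N : EuclideanSpace ℝ (Fin n) → EuclideanSpace ℝ (Fin n))
    (hNsm : ContDiffOn ℝ (⊤ : ℕ∞) N S)
    (hNne : ∀ x ∈ S, N x ≠ 0)
    (hNint : ∀ x ∈ S, ∀ y ∈ S, ⟪N x + N y, y - x⟫ = 0)
    -- the affine 2-plane π through p with direction space P
    (p : EuclideanSpace ℝ (Fin n)) (P : Submodule ℝ (EuclideanSpace ℝ (Fin n)))
    (hP : Module.finrank ℝ P = 2)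
    (π : Set (EuclideanSpace ℝ (Fin n))) (hπ : π = {z | z - p ∈ P})
    -- transversality: at each point of S ∩ π the direction space of π is not
    -- contained in the tangent hyperplane ker ⟪N x, ·⟫
    (htrans : ∀ x ∈ S ∩ π, ∃ v ∈ P, ⟪N x, v⟫ ≠ 0)
    -- γ: a regular parameterization of the curve S ∩ π
    (g : ℝ → EuclideanSpace ℝ (Fin n)) (hg : ContDiff ℝ (⊤ : ℕ∞) g)
    (hgmem : ∀ t, g t ∈ S ∩ π) (hgreg : ∀ t, deriv g t ≠ 0)
    -- N is orthogonal to the tangent spaces of S, in particular to γ'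
    (hNtan : ∀ t, ⟪N (g t), deriv g t⟫ = 0)
    -- ν: the orthogonal projection of N to the direction space of π
    (ν : EuclideanSpace ℝ (Fin n) → EuclideanSpace ℝ (Fin n))
    (hν : ∀ x, ν x = (P.orthogonalProjection (N x) : EuclideanSpace ℝ (Fin n))) :
    (∀ t, ν (g t) ≠ 0) ∧
    (∀ t, ⟪ν (g t), deriv g t⟫ = 0) ∧
    (∀ x ∈ S ∩ π, ∀ y ∈ S ∩ π, ⟪ν x + ν y, y - x⟫ = 0) := by
  have hmemP : ∀ x ∈ π, x - p ∈ P := by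
    intro x hx; rw [hπ] at hx; exact hx
  refine ⟨?_, ?_, ?_⟩
  · intro t h0
    obtain ⟨v, hv, hvne⟩ := htrans (g t) (hgmem t)
    apply hvne
    rw [← proj_inner_eq P (N (g t)) v hv, ← hν, h0, inner_zero_left]
  · intro t
    have hd : deriv g t ∈ P :=
      deriv_mem_of_mem P p g hg (fun s => hmemP _ (hgmem s).2) t
    rw [hν, proj_inner_eq P _ _ hd, hNtan]
  · intro x hx y hy
    have hxy : y - x ∈ P := by
      have := P.sub_mem (hmemP y hy.2) (hmemP x hx.2)
      simpa using this
    rw [hν, hν, inner_add_left, proj_inner_eq P _ _ hxy, proj_inner_eq P _ _ hxy,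
      ← inner_add_left]
    exact hNint x hx.1 y hy.1
end
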